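/- For any representation V of a quiver Q, a weight σ, the minimal witness W of (V,σ), and any morphism φ : W → V/W, the kernel of φ is a witness of (V,σ); consequently ker φ = W and φ has image of dimension vector i with σ(i) ≤ 0 implying σ(i) = 0. -/

import Mathlib

open Module

/-- A family of subspaces `W x ⊆ ℂ^{α x}` is a subrepresentation of the
representation `M` of the quiver with vertices `Vt`, arrows `At`,
head map `hd`, tail map `tl`, if it is stable under all arrow maps. -/
def IsSubrep {Vt At : Type} (hd tl : At → Vt) (α : Vt → ℕ)
    (M : ∀ a : At, Matrix (Fin (α (hd a))) (Fin (α (tl a))) ℂ)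
    (W : ∀ x : Vt, Submodule ℂ (Fin (α x) → ℂ)) : Prop :=
  ∀ a : At, ∀ v ∈ W (tl a), (M a).mulVec v ∈ W (hd a)

/-- `σ(dim W) = ∑ x σ(x) dim W(x)`. -/
noncomputable def sval {Vt : Type} [Fintype Vt] (α : Vt → ℕ) (σ : Vt → ℤ)
    (W : ∀ x : Vt, Submodule ℂ (Fin (α x) → ℂ)) : ℤ :=
  ∑ x, σ x * (Module.finrank ℂ (W x) : ℤ)

/-- A witness of `(V,σ)` : a subrepresentation maximizing `σ(dim ·)`
(i.e. attaining the discrepancy). -/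
def IsWitness {Vt At : Type} [Fintype Vt] (hd tl : At → Vt) (α : Vt → ℕ)
    (M : ∀ a : At, Matrix (Fin (α (hd a))) (Fin (α (tl a))) ℂ) (σ : Vt → ℤ)
    (W : ∀ x : Vt, Submodule ℂ (Fin (α x) → ℂ)) : Prop :=
  IsSubrep hd tl α M W ∧
    ∀ W', IsSubrep hd tl α M W' → sval α σ W' ≤ sval α σ W

/-! Let `W` be a witness and `φ : W → V/W` a morphism. The preimage `U` of `im φ` in `V` and the
subspace `ker φ ⊆ W` are subrepresentations of `V`, and `dim U = dim W + dim im φ`,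
`dim W = dim ker φ + dim im φ`. Maximality of `σ(dim W)` against `U` forces `σ(dim im φ) ≤ 0`,
hence `σ(dim ker φ) ≥ σ(dim W)`, so `ker φ` is again a witness. If `W` is minimal, `ker φ = W`,
i.e. `φ = 0`. -/

theorem Submodule.finrank_comap_mkQ {K V : Type*} [DivisionRing K] [AddCommGroup V]
    [Module K V] [FiniteDimensional K V] (W : Submodule K V) (R : Submodule K (V ⧸ W)) :
    finrank K (R.comap W.mkQ) = finrank K W + finrank K R := by
  set f := W.mkQ.domRestrict (R.comap W.mkQ)
  have hrange : LinearMap.range f = R := by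
    rw [LinearMap.range_domRestrict, Submodule.map_comap_eq_of_surjective W.mkQ_surjective]
  have hker : finrank K (LinearMap.ker f) = finrank K W := by
    rw [LinearMap.ker_domRestrict, Submodule.ker_mkQ]
    exact (Submodule.comapSubtypeEquivOfLe (W.le_comap_mkQ R)).finrank_eq
  have := f.finrank_range_add_finrank_ker
  rw [hrange, hker] at this
  omega

theorem sval_eq_add_of_finrank_eq_add {Vt : Type} [Fintype Vt] {α : Vt → ℕ} (σ : Vt → ℤ)
    {A B : ∀ x : Vt, Submodule ℂ (Fin (α x) → ℂ)} (d : Vt → ℕ)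
    (h : ∀ x, finrank ℂ (A x) = finrank ℂ (B x) + d x) :
    sval α σ A = sval α σ B + ∑ x, σ x * (d x : ℤ) := by
  simp only [sval, h, Nat.cast_add, mul_add, Finset.sum_add_distrib]

section QuiverRep

variable {Vt At : Type} {hd tl : At → Vt} {α : Vt → ℕ}
  {M : ∀ a : At, Matrix (Fin (α (hd a))) (Fin (α (tl a))) ℂ}
  {W : ∀ x : Vt, Submodule ℂ (Fin (α x) → ℂ)}

def IsHomToQuotient (hW : IsSubrep hd tl α M W)
    (φ : ∀ x : Vt, W x →ₗ[ℂ] ((Fin (α x) → ℂ) ⧸ W x)) : Prop :=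
  ∀ a : At, ∀ v : W (tl a),
    φ (hd a) ⟨(M a).mulVec v, hW a v v.2⟩ =
      Submodule.mapQ (W (tl a)) (W (hd a)) (M a).mulVecLin (fun u hu => hW a u hu) (φ (tl a) v)

variable {hW : IsSubrep hd tl α M W} {φ : ∀ x : Vt, W x →ₗ[ℂ] ((Fin (α x) → ℂ) ⧸ W x)}

theorem IsHomToQuotient.isSubrep_map_subtype_ker (hφ : IsHomToQuotient hW φ) :
    IsSubrep hd tl α M (fun x => (LinearMap.ker (φ x)).map (W x).subtype) := by
  rintro a _ ⟨u, hu, rfl⟩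
  refine ⟨⟨(M a).mulVec u, hW a u u.2⟩, ?_, rfl⟩
  rw [SetLike.mem_coe, LinearMap.mem_ker] at hu ⊢
  rw [hφ a u, hu, map_zero]

theorem IsHomToQuotient.isSubrep_comap_mkQ_range (hφ : IsHomToQuotient hW φ) :
    IsSubrep hd tl α M (fun x => (LinearMap.range (φ x)).comap (W x).mkQ) := by
  rintro a v ⟨u, hu⟩
  exact ⟨⟨(M a).mulVec u, hW a u u.2⟩, by
    rw [hφ a u, hu]
    rfl⟩

variable [Fintype Vt] {σ : Vt → ℤ}

theorem IsWitness.sum_finrank_range_nonpos (hwit : IsWitness hd tl α M σ W)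
    (hφ : IsHomToQuotient hwit.1 φ) :
    ∑ x, σ x * (finrank ℂ (LinearMap.range (φ x)) : ℤ) ≤ 0 := by
  have hU := hwit.2 _ hφ.isSubrep_comap_mkQ_range
  rw [sval_eq_add_of_finrank_eq_add σ _ fun x => Submodule.finrank_comap_mkQ (W x) _] at hU
  omega

theorem IsWitness.isWitness_map_subtype_ker (hwit : IsWitness hd tl α M σ W)
    (hφ : IsHomToQuotient hwit.1 φ) :
    IsWitness hd tl α M σ (fun x => (LinearMap.ker (φ x)).map (W x).subtype) := by
  have hWK : sval α σ W = sval α σ (fun x => (LinearMap.ker (φ x)).map (W x).subtype) +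
      ∑ x, σ x * (finrank ℂ (LinearMap.range (φ x)) : ℤ) :=
    sval_eq_add_of_finrank_eq_add σ _ fun x => by
      rw [Submodule.finrank_map_subtype_eq, ← (φ x).finrank_range_add_finrank_ker, add_comm]
  have hnonpos := hwit.sum_finrank_range_nonpos hφ
  exact ⟨hφ.isSubrep_map_subtype_ker, fun W' hW' => (hwit.2 W' hW').trans (by omega)⟩

end QuiverRep

theorem kernel_of_hom_minimal_witness_general {Vt At : Type} [Fintype Vt]
    (hd tl : At → Vt) (α : Vt → ℕ)
    (M : ∀ a : At, Matrix (Fin (α (hd a))) (Fin (α (tl a))) ℂ) (σ : Vt → ℤ)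
    (W : ∀ x : Vt, Submodule ℂ (Fin (α x) → ℂ))
    (hwit : IsWitness hd tl α M σ W)
    (hmin : ∀ W', IsWitness hd tl α M σ W' → ∀ x, W x ≤ W' x)
    (φ : ∀ x : Vt, W x →ₗ[ℂ] ((Fin (α x) → ℂ) ⧸ W x))
    (hφ : ∀ a : At, ∀ v : W (tl a),
      φ (hd a) ⟨(M a).mulVec v, hwit.1 a v v.2⟩ =
        Submodule.mapQ (W (tl a)) (W (hd a)) (M a).mulVecLin
          (fun u hu => hwit.1 a u hu) (φ (tl a) v)) :
    IsWitness hd tl α M σ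
        (fun x => (LinearMap.ker (φ x)).map (W x).subtype) ∧
      (∀ x, (LinearMap.ker (φ x)).map (W x).subtype = W x) ∧
      (∑ x, σ x * (Module.finrank ℂ (LinearMap.range (φ x)) : ℤ)) ≤ 0 ∧
      (∑ x, σ x * (Module.finrank ℂ (LinearMap.range (φ x)) : ℤ)) = 0 := by
  have hK := hwit.isWitness_map_subtype_ker hφ
  have hKeq : ∀ x, (LinearMap.ker (φ x)).map (W x).subtype = W x := fun x =>
    le_antisymm (Submodule.map_subtype_le _ _) (hmin _ hK x)
  have hrange : ∀ x, finrank ℂ (LinearMap.range (φ x)) = 0 := fun x => by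
    have hker : LinearMap.ker (φ x) = ⊤ :=
      Submodule.map_injective_of_injective (W x).injective_subtype
        (by rw [hKeq x, Submodule.map_subtype_top])
    rw [LinearMap.ker_eq_top.mp hker, LinearMap.range_zero, finrank_bot]
  exact ⟨hK, hKeq, hwit.sum_finrank_range_nonpos hφ, by simp [hrange]⟩

/-- Let `W` be the minimal witness of `(V,σ)` and `φ : W → V/W` a morphism of
representations. Then `ker φ` (viewed as a subrepresentation of `V`) is a
witness of `(V,σ)`; consequently `ker φ = W`, and the dimension vector `i` of
the image of `φ` satisfies `σ(i) ≤ 0` and indeed `σ(i) = 0`. -/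
theorem kernel_of_hom_minimal_witness {Vt At : Type} [Fintype Vt] [Fintype At]
    (hd tl : At → Vt) (α : Vt → ℕ)
    (M : ∀ a : At, Matrix (Fin (α (hd a))) (Fin (α (tl a))) ℂ) (σ : Vt → ℤ)
    (W : ∀ x : Vt, Submodule ℂ (Fin (α x) → ℂ))
    (hwit : IsWitness hd tl α M σ W)
    (hmin : ∀ W', IsWitness hd tl α M σ W' → ∀ x, W x ≤ W' x)
    (φ : ∀ x : Vt, W x →ₗ[ℂ] ((Fin (α x) → ℂ) ⧸ W x))
    (hφ : ∀ a : At, ∀ v : W (tl a),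
      φ (hd a) ⟨(M a).mulVec v, hwit.1 a v v.2⟩ =
        Submodule.mapQ (W (tl a)) (W (hd a)) (M a).mulVecLin
          (fun u hu => hwit.1 a u hu) (φ (tl a) v)) :
    IsWitness hd tl α M σ
        (fun x => (LinearMap.ker (φ x)).map (W x).subtype) ∧
      (∀ x, (LinearMap.ker (φ x)).map (W x).subtype = W x) ∧
      (∑ x, σ x * (Module.finrank ℂ (LinearMap.range (φ x)) : ℤ)) ≤ 0 ∧
      (∑ x, σ x * (Module.finrank ℂ (LinearMap.range (φ x)) : ℤ)) = 0 :=
  kernel_of_hom_minimal_witness_general hd tl α M σ W hwit hmin φ hφ
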